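/- arXiv:2201.12196 — 4 statements merged into one kernel-verified Lean document; each statement's English description precedes it below -/
import Mathlib

section
/- With notation as above, for i ≠ j the open-interval images satisfy S_{t_i}((0,1)) ∩ K_j = ∅ and S_{s_i}((0,1)) ∩ K_j = ∅; that is, the Cantor set K_j is disjoint from the open images of the maps belonging to the i-th block. -/
open Set

/-- for `i ≠ j`, the open-interval images of the maps of the
`i`-th block are disjoint from the Cantor set `K_j`:
`S_{t_i}((0,1)) ∩ K_j = ∅` and `S_{s_i}((0,1)) ∩ K_j = ∅`. -/
theorem stmt_4 (R : ℕ) (hR6 : R % 6 = 2) (hR : 14 ≤ R) (i j : ℕ)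
    (hi1 : 1 ≤ i) (hi2 : i ≤ (R - 2) / 6)
    (hj1 : 1 ≤ j) (hj2 : j ≤ (R - 2) / 6) (hij : i ≠ j)
    (Kj : Set ℝ) (hne : Kj.Nonempty) (hcomp : IsCompact Kj)
    (hfix : Kj =
        (fun x : ℝ => x / R + ((6 * (j : ℝ) - 4) * ((R : ℝ) - 1)) / (R : ℝ) ^ 2) '' Kj ∪
        (fun x : ℝ => x / R + ((6 * (j : ℝ)) * ((R : ℝ) - 1)) / (R : ℝ) ^ 2) '' Kj)
    (hsub : Kj ⊆ Set.Icc ((6 * (j : ℝ) - 4) / R) ((6 * (j : ℝ)) / R)) :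
    ((fun x : ℝ => x / R + ((6 * (i : ℝ) - 4) * ((R : ℝ) - 1)) / (R : ℝ) ^ 2) ''
        Set.Ioo 0 1) ∩ Kj = ∅ ∧
      ((fun x : ℝ => x / R + ((6 * (i : ℝ)) * ((R : ℝ) - 1)) / (R : ℝ) ^ 2) ''
        Set.Ioo 0 1) ∩ Kj = ∅ := by
  have hRr : (14 : ℝ) ≤ (R : ℝ) := by exact_mod_cast hR
  have hRpos : (0 : ℝ) < (R : ℝ) := by linarith
  have h6i : 6 * i ≤ R - 2 := by
    have := (Nat.le_div_iff_mul_le (by norm_num : 0 < 6)).mp hi2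
    omega
  have h6j : 6 * j ≤ R - 2 := by
    have := (Nat.le_div_iff_mul_le (by norm_num : 0 < 6)).mp hj2
    omega
  have h6i' : 6 * (i : ℝ) ≤ (R : ℝ) - 2 := by
    have : (6 * i : ℕ) ≤ (R - 2 : ℕ) := h6i
    have h2 : ((R - 2 : ℕ) : ℝ) = (R : ℝ) - 2 := by
      have : 2 ≤ R := by omega
      push_cast [Nat.cast_sub this]; ring
    calc 6 * (i : ℝ) = ((6 * i : ℕ) : ℝ) := by push_cast; ring
      _ ≤ ((R - 2 : ℕ) : ℝ) := by exact_mod_cast this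
      _ = (R : ℝ) - 2 := h2
  have h6j' : 6 * (j : ℝ) ≤ (R : ℝ) - 2 := by
    have : (6 * j : ℕ) ≤ (R - 2 : ℕ) := h6j
    have h2 : ((R - 2 : ℕ) : ℝ) = (R : ℝ) - 2 := by
      have : 2 ≤ R := by omega
      push_cast [Nat.cast_sub this]; ring
    calc 6 * (j : ℝ) = ((6 * j : ℕ) : ℝ) := by push_cast; ring
      _ ≤ ((R - 2 : ℕ) : ℝ) := by exact_mod_cast this
      _ = (R : ℝ) - 2 := h2
  have hi1' : (1 : ℝ) ≤ (i : ℝ) := by exact_mod_cast hi1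
  have hj1' : (1 : ℝ) ≤ (j : ℝ) := by exact_mod_cast hj1
  have hcase : (i : ℝ) + 1 ≤ (j : ℝ) ∨ (j : ℝ) + 1 ≤ (i : ℝ) := by
    rcases lt_or_gt_of_ne hij with h | h
    · left; exact_mod_cast Nat.succ_le_of_lt h
    · right; exact_mod_cast Nat.succ_le_of_lt h
  constructor
  · ext x
    simp only [mem_inter_iff, mem_image, mem_Ioo, mem_empty_iff_false, iff_false, not_and]
    rintro ⟨y, ⟨hy0, hy1⟩, rfl⟩ hK
    have hb := hsub hK
    have hlo := hb.1
    have hhi := hb.2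
    rw [div_le_iff₀ hRpos] at hlo
    rw [le_div_iff₀ hRpos] at hhi
    have hsq : (0:ℝ) < (R:ℝ)^2 := by positivity
    rw [div_add_div _ _ (ne_of_gt hRpos) (ne_of_gt hsq)] at hlo hhi
    rw [div_mul_eq_mul_div, le_div_iff₀ (by positivity : (0:ℝ) < (R:ℝ) * (R:ℝ)^2)] at hlo
    rw [div_mul_eq_mul_div, div_le_iff₀ (by positivity : (0:ℝ) < (R:ℝ) * (R:ℝ)^2)] at hhi
    rcases hcase with h | h
    · nlinarith [mul_pos hRpos hRpos, sq_nonneg ((R:ℝ))]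
    · nlinarith [mul_pos hRpos hRpos, sq_nonneg ((R:ℝ))]
  · ext x
    simp only [mem_inter_iff, mem_image, mem_Ioo, mem_empty_iff_false, iff_false, not_and]
    rintro ⟨y, ⟨hy0, hy1⟩, rfl⟩ hK
    have hb := hsub hK
    have hlo := hb.1
    have hhi := hb.2
    rw [div_le_iff₀ hRpos] at hlo
    rw [le_div_iff₀ hRpos] at hhi
    have hsq : (0:ℝ) < (R:ℝ)^2 := by positivity
    rw [div_add_div _ _ (ne_of_gt hRpos) (ne_of_gt hsq)] at hlo hhi
    rw [div_mul_eq_mul_div, le_div_iff₀ (by positivity : (0:ℝ) < (R:ℝ) * (R:ℝ)^2)] at hlo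
    rw [div_mul_eq_mul_div, div_le_iff₀ (by positivity : (0:ℝ) < (R:ℝ) * (R:ℝ)^2)] at hhi
    rcases hcase with h | h
    · nlinarith [mul_pos hRpos hRpos, sq_nonneg ((R:ℝ))]
    · nlinarith [mul_pos hRpos hRpos, sq_nonneg ((R:ℝ))]
end

section
/- Let R be an even integer, R ≥ 4, and for i = 0,...,R/2 set t_i = 2i(R-1). Then for i ≠ j, the point 2j/R does not lie in the open interval S_{t_i}((0,1)) = (2i(R-1)/R², (2i(R-1)+R)/R²). -/
open Set

/-- with `R ≥ 4` even and `t_i = 2i(R-1)`, for `i ≠ j`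
(`0 ≤ i, j ≤ R/2`) the point `2j/R` does not lie in the open interval
`S_{t_i}((0,1)) = (2i(R-1)/R², (2i(R-1)+R)/R²)`. -/
theorem stmt_10 (R : ℕ) (hR : 4 ≤ R) (hEven : Even R) (i j : ℕ)
    (hi : i ≤ R / 2) (hj : j ≤ R / 2) (hij : i ≠ j) :
    (2 * (j : ℝ) / R) ∉
      Set.Ioo (2 * (i : ℝ) * ((R : ℝ) - 1) / (R : ℝ) ^ 2)
        ((2 * (i : ℝ) * ((R : ℝ) - 1) + R) / (R : ℝ) ^ 2) := by
  intro hmem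
  obtain ⟨h1, h2⟩ := hmem
  have h4 : (4:ℝ) ≤ (R:ℝ) := by exact_mod_cast hR
  have hR0 : (0:ℝ) < (R:ℝ) := by linarith
  have hR2 : (0:ℝ) < (R:ℝ) ^ 2 := by positivity
  have hiN : 2 * i ≤ R := le_trans (Nat.mul_le_mul_left 2 hi)
    (by rw [mul_comm]; exact Nat.div_mul_le_self R 2)
  have hiR : 2 * (i:ℝ) ≤ (R:ℝ) := by exact_mod_cast hiN
  have h1' : 2 * (i:ℝ) * ((R:ℝ) - 1) * (R:ℝ) < 2 * (j:ℝ) * (R:ℝ)^2 :=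
    (div_lt_div_iff₀ hR2 hR0).mp h1
  have h2' : 2 * (j:ℝ) * (R:ℝ)^2 < (2 * (i:ℝ) * ((R:ℝ) - 1) + R) * (R:ℝ) :=
    (div_lt_div_iff₀ hR0 hR2).mp h2
  rcases lt_or_gt_of_ne hij with h | h
  · have hij' : (i:ℝ) + 1 ≤ (j:ℝ) := by exact_mod_cast h
    nlinarith
  · have hij' : (j:ℝ) + 1 ≤ (i:ℝ) := by exact_mod_cast h
    nlinarith
end

section
/- Let R be even, R ≥ 4, with index set I = { i ∈ {0,...,R(R-1)} : S_i((0,1)) ∩ {0, 2/R, 4/R, ..., 1} = ∅ } where S_i(x) = x/R + i/R². Then the union of S_i([0,1]) over i ∈ I together with S_{t_j}([0,1]) for j = 0,...,R/2 (t_j = 2j(R-1)) covers [0,1]. -/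
/-!
The grid indices `i = m R` with `m < R` already suffice: `S_{mR}` maps `[0,1]` onto
`[m/R, (m+1)/R]`, these `R` intervals cover `[0,1]`, and the open interval `(m/R, (m+1)/R)`
contains no point `k/R` with `k` a natural number, in particular none of the points `2j/R`.
-/

open Set

lemma natCast_notMem_Ioo_natCast_add_one (k m : ℕ) : (k : ℝ) ∉ Ioo (m : ℝ) (m + 1) := by
  rintro ⟨hmk, hkm⟩
  have hmk' : m < k := by exact_mod_cast hmk
  have hkm' : k < m + 1 := by exact_mod_cast hkm
  omega

lemma exists_natCast_sub_mem_Icc {n : ℕ} (hn : 1 ≤ n) {t : ℝ} (ht0 : 0 ≤ t) (htn : t ≤ n) :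
    ∃ m < n, t - m ∈ Icc (0 : ℝ) 1 := by
  by_cases htop : t < n - 1
  · refine ⟨⌊t⌋₊, ?_, sub_nonneg.mpr (Nat.floor_le ht0), ?_⟩
    · have : t < ((n - 1 : ℕ) : ℝ) := by rw [Nat.cast_sub hn, Nat.cast_one]; exact htop
      have := (Nat.floor_lt ht0).mpr this
      omega
    · linarith [Nat.lt_floor_add_one t]
  · refine ⟨n - 1, by omega, ?_⟩
    rw [Nat.cast_sub hn, Nat.cast_one]
    constructor <;> linarith

lemma div_add_mul_div_sq {R : ℝ} (hR : R ≠ 0) (x m : ℝ) :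
    x / R + m * R / R ^ 2 = (x + m) / R := by
  field_simp

theorem stmt_11_general (R : ℕ) (hR : 4 ≤ R) :
    Set.Icc (0 : ℝ) 1 ⊆
      (⋃ i ∈ {i : ℕ | i ≤ R * (R - 1) ∧
          ∀ j ≤ R / 2, (2 * (j : ℝ) / R) ∉
            (fun x : ℝ => x / R + (i : ℝ) / (R : ℝ) ^ 2) '' Set.Ioo 0 1},
        (fun x : ℝ => x / R + (i : ℝ) / (R : ℝ) ^ 2) '' Set.Icc 0 1) ∪
      ⋃ j ∈ Finset.range (R / 2 + 1),
        (fun x : ℝ => x / R + ((2 * j * (R - 1) : ℕ) : ℝ) / (R : ℝ) ^ 2) ''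
          Set.Icc 0 1 := by
  have hR0 : (0 : ℝ) < R := by exact_mod_cast (by omega : 0 < R)
  rintro x ⟨hx0, hx1⟩
  obtain ⟨m, hmR, hxm⟩ := exists_natCast_sub_mem_Icc (by omega : 1 ≤ R)
    (t := R * x) (by positivity) (by nlinarith)
  refine Or.inl (mem_iUnion₂.mpr ⟨m * R, ⟨?_, ?_⟩, R * x - m, hxm, ?_⟩)
  · rw [Nat.mul_comm]
    exact Nat.mul_le_mul_left R (by omega)
  · rintro j - ⟨y, ⟨hy0, hy1⟩, hyj⟩
    simp only [Nat.cast_mul, div_add_mul_div_sq hR0.ne', div_left_inj' hR0.ne'] at hyj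
    exact natCast_notMem_Ioo_natCast_add_one (2 * j) m
      ⟨by push_cast; linarith, by push_cast; linarith⟩
  · simp only [Nat.cast_mul, div_add_mul_div_sq hR0.ne', sub_add_cancel]
    field_simp

/-- with `R ≥ 4` even, `S_i(x) = x/R + i/R²` and
`I = {i ≤ R(R-1) : S_i((0,1)) avoids all points 2j/R, j = 0, …, R/2}`,
the images `S_i([0,1])`, `i ∈ I`, together with `S_{t_j}([0,1])`,
`t_j = 2j(R-1)`, `j = 0, …, R/2`, cover `[0,1]`. -/
theorem stmt_11 (R : ℕ) (hR : 4 ≤ R) (hEven : Even R) :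
    Set.Icc (0 : ℝ) 1 ⊆
      (⋃ i ∈ {i : ℕ | i ≤ R * (R - 1) ∧
          ∀ j ≤ R / 2, (2 * (j : ℝ) / R) ∉
            (fun x : ℝ => x / R + (i : ℝ) / (R : ℝ) ^ 2) '' Set.Ioo 0 1},
        (fun x : ℝ => x / R + (i : ℝ) / (R : ℝ) ^ 2) '' Set.Icc 0 1) ∪
      ⋃ j ∈ Finset.range (R / 2 + 1),
        (fun x : ℝ => x / R + ((2 * j * (R - 1) : ℕ) : ℝ) / (R : ℝ) ^ 2) ''
          Set.Icc 0 1 :=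
  stmt_11_general R hR
end

section
/- Let τ_A, τ_B : ℝ → ℝ be given by τ_A(t) = −log(a^t)/log R = −t·log a/log R and τ_B(t) = −log(b^t + c^t)/log R with 0 < a < min(b,c) ≤ max(b,c) < 1, b + c < 1, R > 1. Then the equation τ_A(t) = τ_B(t), i.e., a^t = b^t + c^t, has exactly one real solution t*, which is negative, and min(τ_A, τ_B) is not differentiable at t* whenever log a ≠ (b^{t*} log b + c^{t*} log c)/(b^{t*} + c^{t*}). -/
open Real

/-- If two functions are differentiable at `t` with equal values but different
derivatives, their pointwise minimum is not differentiable at `t`. -/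
lemma not_differentiableAt_min {f g : ℝ → ℝ} {t m₁ m₂ : ℝ}
    (hf : HasDerivAt f m₁ t) (hg : HasDerivAt g m₂ t) (heq : f t = g t)
    (hne : m₁ ≠ m₂) : ¬ DifferentiableAt ℝ (fun u => min (f u) (g u)) t := by
  intro hd
  set h : ℝ → ℝ := fun u => f u - g u with hhdef
  have hh : HasDerivAt h (m₁ - m₂) t := hf.sub hg
  have hh0 : h t = 0 := sub_eq_zero.mpr heq
  set φ : ℝ → ℝ := fun u => |h u| with hφdef
  have hφeq : φ = fun u => f u + g u - 2 * min (f u) (g u) := by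
    funext u
    rcases le_total (f u) (g u) with h' | h'
    · simp only [φ, h, min_eq_left h', abs_of_nonpos (sub_nonpos.mpr h')]; ring
    · simp only [φ, h, min_eq_right h', abs_of_nonneg (sub_nonneg.mpr h')]; ring
  have hdφ : DifferentiableAt ℝ φ t := by
    rw [hφeq]
    exact (hf.differentiableAt.add hg.differentiableAt).sub (hd.const_mul 2)
  obtain ⟨ℓ, hℓ⟩ : ∃ ℓ, HasDerivAt φ ℓ t := ⟨deriv φ t, hdφ.hasDerivAt⟩
  have hφ0 : φ t = 0 := by simp [φ, hh0]
  have hs1 : Filter.Tendsto (slope φ t) (nhdsWithin t {t}ᶜ) (nhds ℓ) :=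
    hasDerivAt_iff_tendsto_slope.mp hℓ
  have hs2 : Filter.Tendsto (slope h t) (nhdsWithin t {t}ᶜ) (nhds (m₁ - m₂)) :=
    hasDerivAt_iff_tendsto_slope.mp hh
  -- |ℓ| = |m₁ - m₂|
  have key : (fun u => |slope φ t u|) = fun u => |slope h t u| := by
    funext u
    simp [slope_def_field, hφ0, hh0, abs_div, φ]
  have h1 : Filter.Tendsto (fun u => |slope φ t u|) (nhdsWithin t {t}ᶜ)
      (nhds |ℓ|) := hs1.abs
  have h2 : Filter.Tendsto (fun u => |slope φ t u|) (nhdsWithin t {t}ᶜ)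
      (nhds |m₁ - m₂|) := by rw [key]; exact hs2.abs
  have habs : |ℓ| = |m₁ - m₂| := tendsto_nhds_unique h1 h2
  -- ℓ ≥ 0 from the right
  have hright : Filter.Tendsto (slope φ t) (nhdsWithin t (Set.Ioi t)) (nhds ℓ) :=
    hs1.mono_left (nhdsWithin_mono t (fun x hx => Set.mem_compl_singleton_iff.mpr
      (ne_of_gt hx)))
  have hL1 : 0 ≤ ℓ := by
    refine ge_of_tendsto hright ?_
    filter_upwards [self_mem_nhdsWithin] with u hu
    rw [slope_def_field, hφ0, sub_zero]
    exact div_nonneg (abs_nonneg _) (sub_nonneg.mpr (le_of_lt hu))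
  have hleft : Filter.Tendsto (slope φ t) (nhdsWithin t (Set.Iio t)) (nhds ℓ) :=
    hs1.mono_left (nhdsWithin_mono t (fun x hx => Set.mem_compl_singleton_iff.mpr
      (ne_of_lt hx)))
  have hL2 : ℓ ≤ 0 := by
    refine le_of_tendsto hleft ?_
    filter_upwards [self_mem_nhdsWithin] with u hu
    rw [slope_def_field, hφ0, sub_zero]
    exact div_nonpos_of_nonneg_of_nonpos (abs_nonneg _)
      (sub_nonpos.mpr (le_of_lt hu))
  have : ℓ = 0 := le_antisymm hL2 hL1
  rw [this] at habs
  rw [abs_zero] at habs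
  exact hne (sub_eq_zero.mp (abs_eq_zero.mp habs.symm))

/-- with `0 < a < min(b,c) < 1`, `b + c < 1`, `R > 1`,
`τ_A(t) = −t log a/log R` and `τ_B(t) = −log(bᵗ + cᵗ)/log R`, the equation
`τ_A(t) = τ_B(t)` (i.e. `aᵗ = bᵗ + cᵗ`) has exactly one real solution; that
solution is negative; and `min(τ_A, τ_B)` is not differentiable at it whenever
`log a ≠ (b^{t*} log b + c^{t*} log c)/(b^{t*} + c^{t*})`. -/
theorem stmt_14 (a b c R : ℝ) (ha : 0 < a) (hab : a < b) (hac : a < c)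
    (hb1 : b < 1) (hc1 : c < 1) (hbc : b + c < 1) (hR : 1 < R) :
    (∃! t : ℝ, a ^ t = b ^ t + c ^ t) ∧
      ∀ t : ℝ, a ^ t = b ^ t + c ^ t →
        t < 0 ∧
          (Real.log a ≠
              (b ^ t * Real.log b + c ^ t * Real.log c) / (b ^ t + c ^ t) →
            ¬ DifferentiableAt ℝ
              (fun u : ℝ => min (-(u * Real.log a) / Real.log R)
                (-Real.log (b ^ u + c ^ u) / Real.log R)) t) := by
  have hb : 0 < b := ha.trans hab
  have hc : 0 < c := ha.trans hac
  have hba : 1 < b / a := (one_lt_div ha).mpr hab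
  have hca : 1 < c / a := (one_lt_div ha).mpr hac
  -- normalized function g(t) = (b/a)^t + (c/a)^t, strictly monotone
  set G : ℝ → ℝ := fun t => (b / a) ^ t + (c / a) ^ t with hGdef
  have hGmono : StrictMono G := by
    intro s t hst
    exact add_lt_add ((Real.rpow_lt_rpow_left_iff hba).mpr hst)
      ((Real.rpow_lt_rpow_left_iff hca).mpr hst)
  have hiff : ∀ t : ℝ, (a ^ t = b ^ t + c ^ t) ↔ G t = 1 := by
    intro t
    have hat : (0:ℝ) < a ^ t := Real.rpow_pos_of_pos ha t
    rw [hGdef]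
    simp only [Real.div_rpow hb.le ha.le, Real.div_rpow hc.le ha.le]
    rw [← add_div, div_eq_one_iff_eq hat.ne']
    exact ⟨fun h => h.symm, fun h => h.symm⟩
  have hG0 : G 0 = 2 := by norm_num [hGdef]
  have hGcont : Continuous G := by
    have hGe : G = fun t => Real.exp (Real.log (b / a) * t) +
        Real.exp (Real.log (c / a) * t) := by
      funext t
      rw [hGdef]
      simp only
      rw [Real.rpow_def_of_pos (by positivity), Real.rpow_def_of_pos (by positivity)]
    rw [hGe]
    exact (Real.continuous_exp.comp (continuous_const.mul continuous_id)).add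
      (Real.continuous_exp.comp (continuous_const.mul continuous_id))
  -- existence of a point where G ≤ 1
  have hex : ∃ t₀ : ℝ, t₀ ≤ 0 ∧ G t₀ ≤ 1 := by
    have hlogba : 0 < Real.log (b / a) := Real.log_pos hba
    have hlogca : 0 < Real.log (c / a) := Real.log_pos hca
    set t₀ : ℝ := min (-Real.log 2 / Real.log (b / a))
        (-Real.log 2 / Real.log (c / a)) with ht₀
    have hlog2 : (0:ℝ) < Real.log 2 := Real.log_pos one_lt_two
    have h₀ : t₀ ≤ 0 := by
      apply min_le_of_left_le
      exact le_of_lt (div_neg_of_neg_of_pos (neg_neg_of_pos hlog2) hlogba)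
    refine ⟨t₀, h₀, ?_⟩
    have h1 : (b / a) ^ t₀ ≤ 1 / 2 := by
      rw [Real.rpow_def_of_pos (by positivity)]
      have : Real.log (b / a) * t₀ ≤ -Real.log 2 := by
        have := min_le_left (-Real.log 2 / Real.log (b / a))
          (-Real.log 2 / Real.log (c / a))
        calc Real.log (b / a) * t₀ ≤ Real.log (b / a) *
              (-Real.log 2 / Real.log (b / a)) := by
              exact mul_le_mul_of_nonneg_left this hlogba.le
          _ = -Real.log 2 := by field_simp
      calc Real.exp (Real.log (b / a) * t₀) ≤ Real.exp (-Real.log 2) :=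
            Real.exp_le_exp.mpr this
        _ = 1 / 2 := by
            rw [Real.exp_neg, Real.exp_log two_pos]; norm_num
    have h2 : (c / a) ^ t₀ ≤ 1 / 2 := by
      rw [Real.rpow_def_of_pos (by positivity)]
      have : Real.log (c / a) * t₀ ≤ -Real.log 2 := by
        have := min_le_right (-Real.log 2 / Real.log (b / a))
          (-Real.log 2 / Real.log (c / a))
        calc Real.log (c / a) * t₀ ≤ Real.log (c / a) *
              (-Real.log 2 / Real.log (c / a)) := by
              exact mul_le_mul_of_nonneg_left this hlogca.le
          _ = -Real.log 2 := by field_simp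
      calc Real.exp (Real.log (c / a) * t₀) ≤ Real.exp (-Real.log 2) :=
            Real.exp_le_exp.mpr this
        _ = 1 / 2 := by
            rw [Real.exp_neg, Real.exp_log two_pos]; norm_num
    calc G t₀ ≤ 1 / 2 + 1 / 2 := add_le_add h1 h2
      _ = 1 := by norm_num
  obtain ⟨t₀, ht₀0, ht₀⟩ := hex
  have hIVT : ∃ t ∈ Set.Icc t₀ 0, G t = 1 := by
    have := intermediate_value_Icc ht₀0 hGcont.continuousOn
    have hmem : (1:ℝ) ∈ Set.Icc (G t₀) (G 0) := ⟨ht₀, by rw [hG0]; norm_num⟩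
    exact this hmem
  obtain ⟨ts, _, hts⟩ := hIVT
  constructor
  · refine ⟨ts, (hiff ts).mpr hts, ?_⟩
    intro y hy
    exact hGmono.injective (((hiff y).mp hy).trans hts.symm)
  · intro t ht
    have hGt : G t = 1 := (hiff t).mp ht
    have htneg : t < 0 := by
      by_contra hcon
      push_neg at hcon
      have : G 0 ≤ G t := hGmono.monotone hcon
      rw [hG0, hGt] at this
      norm_num at this
    refine ⟨htneg, fun hne => ?_⟩
    have hlogR : 0 < Real.log R := Real.log_pos hR
    set s : ℝ → ℝ := fun u => b ^ u + c ^ u with hsdef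
    have hst : 0 < s t := by positivity
    -- derivatives
    have hfd : HasDerivAt (fun u : ℝ => -(u * Real.log a) / Real.log R)
        (-Real.log a / Real.log R) t := by
      have : HasDerivAt (fun u : ℝ => u) 1 t := hasDerivAt_id t
      simpa [neg_div, mul_comm, mul_div_assoc] using
        ((this.mul_const (Real.log a)).neg.div_const (Real.log R))
    have hsb : HasDerivAt (fun u : ℝ => b ^ u) (b ^ t * Real.log b) t :=
      (Real.hasStrictDerivAt_const_rpow hb t).hasDerivAt
    have hsc : HasDerivAt (fun u : ℝ => c ^ u) (c ^ t * Real.log c) t :=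
      (Real.hasStrictDerivAt_const_rpow hc t).hasDerivAt
    have hsd : HasDerivAt s (b ^ t * Real.log b + c ^ t * Real.log c) t :=
      hsb.add hsc
    have hgd : HasDerivAt (fun u : ℝ => -Real.log (s u) / Real.log R)
        (-((b ^ t * Real.log b + c ^ t * Real.log c) / (b ^ t + c ^ t)) /
          Real.log R) t := by
      have hlog : HasDerivAt (fun u => Real.log (s u))
          ((b ^ t * Real.log b + c ^ t * Real.log c) / s t) t :=
        hsd.log hst.ne'
      simpa [neg_div, hsdef] using (hlog.neg.div_const (Real.log R))
    have hvals : (fun u : ℝ => -(u * Real.log a) / Real.log R) t =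
        (fun u : ℝ => -Real.log (s u) / Real.log R) t := by
      simp only [hsdef]
      rw [← ht, Real.log_rpow ha]
    have hders : -Real.log a / Real.log R ≠
        -((b ^ t * Real.log b + c ^ t * Real.log c) / (b ^ t + c ^ t)) /
          Real.log R := by
      intro hcon
      rw [div_eq_mul_inv, div_eq_mul_inv] at hcon
      have h2 := mul_right_cancel₀ (inv_ne_zero hlogR.ne') hcon
      exact hne (neg_injective h2)
    exact not_differentiableAt_min hfd hgd hvals hders
end
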